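/- For all z, w ∈ ρ(A): (i) ran(G_z) ∩ dom(A) = {0}; (ii) (z − w) R_w G_z = G_w − G_z, so that ran(G_w − G_z) ⊆ dom(A); (iii) A(G_z − G_w) = z G_z − w G_w. -/

import Mathlib

/-!
STATEMENT 3 (relations (2.2)–(2.6) of the paper: `ran G_z ∩ dom A = {0}`,
`(z-w) R_w G_z = G_w - G_z`, `ran (G_w - G_z) ⊆ dom A`, `A (G_z - G_w) = z G_z - w G_w`).

Setting: `A` self-adjoint in the Hilbert space `H`, `τ : dom A → h` continuous
w.r.t. the graph norm, surjective, with dense kernel; for `z ∈ ρ(A)`,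
`R_z := (-A+z)⁻¹` and `G_z := (τ R_{z̄})'` (the dual `h'` identified with `h`),
i.e. `⟪G_z φ, u⟫ = ⟪φ, τ (-A+z̄)⁻¹ u⟫` for all `φ ∈ h'`, `u ∈ H`.
-/

open scoped InnerProductSpace

section
variable {H : Type*} [NormedAddCommGroup H] [InnerProductSpace ℂ H] [CompleteSpace H]

def IsResolvent (A : H →ₗ.[ℂ] H) (z : ℂ) (R : H →L[ℂ] H) : Prop :=
  (∀ x : H, R x ∈ A.domain) ∧
  (∀ (x : H) (hx : R x ∈ A.domain), -(A ⟨R x, hx⟩) + z • R x = x) ∧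
  (∀ u : A.domain, R (-(A u) + z • (u : H)) = (u : H))

def InResolventSet (A : H →ₗ.[ℂ] H) (z : ℂ) : Prop := ∃ R, IsResolvent A z R

def IsSelfAdjointPMap (T : H →ₗ.[ℂ] H) : Prop :=
  Dense (T.domain : Set H) ∧
  (∀ u v : T.domain, ⟪T u, (v : H)⟫_ℂ = ⟪(u : H), T v⟫_ℂ) ∧
  (∀ ψ w : H, (∀ u : T.domain, ⟪ψ, T u⟫_ℂ = ⟪w, (u : H)⟫_ℂ) →
    ∃ hψ : ψ ∈ T.domain, T ⟨ψ, hψ⟩ = w)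

open ContinuousLinearMap in
lemma adjoint_isResolvent {A : H →ₗ.[ℂ] H} (hA : IsSelfAdjointPMap A) {z : ℂ}
    {R : H →L[ℂ] H} (hR : IsResolvent A z R) :
    IsResolvent A (starRingEnd ℂ z) (adjoint R) := by
  obtain ⟨h1, h2, h3⟩ := hR
  -- For every x, `adjoint R x ∈ dom A` with the right action of A.
  have key : ∀ x : H, ∃ hx : adjoint R x ∈ A.domain,
      A ⟨adjoint R x, hx⟩ = (starRingEnd ℂ z) • (adjoint R x) - x := by
    intro x
    apply hA.2.2
    intro u
    have hRAu : R (A u) = -(u : H) + z • R (u : H) := by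
      have e1 : R (-(A u) + z • (u : H)) = (u : H) := h3 u
      have e2 : R (-(A u) + z • (u : H)) = -(R (A u)) + z • R (u : H) := by
        rw [map_add, map_neg, map_smul]
      rw [e2] at e1
      have := congrArg (fun y => -y + z • R (u : H)) e1
      simpa [neg_add, neg_neg, add_assoc] using this
    calc ⟪adjoint R x, A u⟫_ℂ = ⟪x, R (A u)⟫_ℂ := adjoint_inner_left R (A u) x
      _ = ⟪x, -(u : H) + z • R (u : H)⟫_ℂ := by rw [hRAu]
      _ = -⟪x, (u : H)⟫_ℂ + z * ⟪x, R (u : H)⟫_ℂ := by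
          rw [inner_add_right, inner_neg_right, inner_smul_right]
      _ = -⟪x, (u : H)⟫_ℂ + z * ⟪adjoint R x, (u : H)⟫_ℂ := by
          rw [adjoint_inner_left]
      _ = ⟪(starRingEnd ℂ z) • (adjoint R x) - x, (u : H)⟫_ℂ := by
          simp only [inner_sub_left, inner_smul_left, Complex.conj_conj]
          ring
  refine ⟨fun x => (key x).1, fun x hx => ?_, fun u => ?_⟩
  · obtain ⟨hx', hAx⟩ := key x
    have : A ⟨adjoint R x, hx⟩ = (starRingEnd ℂ z) • (adjoint R x) - x := hAx
    rw [this]; abel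
  · -- injectivity step
    set v : H := -(A u) + (starRingEnd ℂ z) • (u : H) with hv
    obtain ⟨hm, hAm⟩ := key v
    set ψ : H := adjoint R v
    -- d := ψ - u satisfies A d = conj z • d
    set d : A.domain := ⟨ψ, hm⟩ - u with hd
    have hAd : A d = (starRingEnd ℂ z) • (d : H) := by
      have h5 : A d = A ⟨ψ, hm⟩ - A u := by
        rw [hd]; exact A.toFun.map_sub _ _
      have hcoe : (d : H) = ψ - (u : H) := rfl
      rw [h5, hAm, hcoe, smul_sub]
      have : -(A u) = v - (starRingEnd ℂ z) • (u : H) := by rw [hv]; abel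
      have hAu : A u = (starRingEnd ℂ z) • (u : H) - v := by
        rw [hv]; abel_nf
      rw [hAu]; abel
    have hd0 : (d : H) = 0 := by
      have hz0 : ∀ x : H, ⟪(d : H), x⟫_ℂ = 0 := by
        intro x
        have hx1 : -(A ⟨R x, h1 x⟩) + z • R x = x := h2 x (h1 x)
        calc ⟪(d : H), x⟫_ℂ = ⟪(d : H), -(A ⟨R x, h1 x⟩) + z • R x⟫_ℂ := by rw [hx1]
          _ = -⟪(d : H), A ⟨R x, h1 x⟩⟫_ℂ + z * ⟪(d : H), R x⟫_ℂ := by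
              rw [inner_add_right, inner_neg_right, inner_smul_right]
          _ = -⟪A d, R x⟫_ℂ + z * ⟪(d : H), R x⟫_ℂ := by
              rw [hA.2.1 d ⟨R x, h1 x⟩]
          _ = 0 := by
              simp only [hAd, inner_smul_left, Complex.conj_conj]
              ring
      have := hz0 (d : H)
      exact inner_self_eq_zero.mp this
    have hd0' : ψ - (u : H) = 0 := hd0
    exact sub_eq_zero.mp hd0'


open ContinuousLinearMap in
theorem statement_3
    {h : Type*} [NormedAddCommGroup h] [InnerProductSpace ℂ h] [CompleteSpace h]
    (A : H →ₗ.[ℂ] H) (hA : IsSelfAdjointPMap A)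
    (τ : A.domain →ₗ[ℂ] h)
    (hτcont : ∃ C : ℝ, ∀ u : A.domain, ‖τ u‖ ≤ C * (‖(u : H)‖ + ‖A u‖))
    (hτsurj : Function.Surjective τ)
    (hkerdense : Dense {x : H | ∃ u : A.domain, (u : H) = x ∧ τ u = 0})
    (G : ℂ → h →L[ℂ] H)
    (hG : ∀ (z : ℂ) (R : H →L[ℂ] H), IsResolvent A (starRingEnd ℂ z) R →
      ∀ (φ : h) (x : H) (hx : R x ∈ A.domain),
        ⟪G z φ, x⟫_ℂ = ⟪φ, τ ⟨R x, hx⟩⟫_ℂ)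
    (z w : ℂ) (hz : InResolventSet A z) (hw : InResolventSet A w) :
    -- (i)  `ran G_z ∩ dom A = {0}`
    (∀ φ : h, G z φ ∈ A.domain → G z φ = 0) ∧
    -- (ii) `(z - w) R_w G_z = G_w - G_z`, hence `ran (G_w - G_z) ⊆ dom A`
    (∀ (Rw : H →L[ℂ] H), IsResolvent A w Rw →
      ∀ φ : h, (z - w) • Rw (G z φ) = G w φ - G z φ) ∧
    (∀ φ : h, G w φ - G z φ ∈ A.domain) ∧
    -- (iii) `A (G_z - G_w) = z G_z - w G_w`
    (∀ (φ : h) (hmem : G z φ - G w φ ∈ A.domain),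
      A ⟨G z φ - G w φ, hmem⟩ = z • G z φ - w • G w φ) := by
  obtain ⟨Rz, hRz⟩ := hz
  obtain ⟨Rw0, hRw0⟩ := hw
  -- the key identity (ii), in symmetric form
  have key : ∀ (a b : ℂ) (Ra Rb : H →L[ℂ] H), IsResolvent A a Ra → IsResolvent A b Rb →
      ∀ φ : h, (a - b) • Rb (G a φ) = G b φ - G a φ := by
    intro a b Ra Rb hRa hRb φ
    have hRa' := adjoint_isResolvent hA hRa
    have hRb' := adjoint_isResolvent hA hRb
    apply ext_inner_right ℂ
    intro x
    -- resolvent identity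
    have hmem1 : adjoint Rb x ∈ A.domain := hRb'.1 x
    have hmem2 : adjoint Ra x ∈ A.domain := hRa'.1 x
    have hmem3 : adjoint Ra (adjoint Rb x) ∈ A.domain := hRa'.1 _
    set u : A.domain := ⟨adjoint Rb x, hmem1⟩ with hu
    have hb : -(A u) + (starRingEnd ℂ b) • (u : H) = x := hRb'.2.1 x hmem1
    have e : -(A u) + (starRingEnd ℂ a) • (u : H)
        = x + (starRingEnd ℂ a - starRingEnd ℂ b) • (u : H) := by
      rw [← hb]; module
    have e2 : adjoint Ra x + (starRingEnd ℂ a - starRingEnd ℂ b) •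
        adjoint Ra ((u : H)) = (u : H) := by
      have h5 := hRa'.2.2 u
      rw [e, map_add, map_smul] at h5
      exact h5
    have hri : (⟨adjoint Rb x, hmem1⟩ - ⟨adjoint Ra x, hmem2⟩ : A.domain)
        = (starRingEnd ℂ a - starRingEnd ℂ b) • (⟨adjoint Ra (adjoint Rb x), hmem3⟩ : A.domain) := by
      apply Subtype.ext
      show adjoint Rb x - adjoint Ra x
        = (starRingEnd ℂ a - starRingEnd ℂ b) • adjoint Ra (adjoint Rb x)
      have e2' : adjoint Ra x + (starRingEnd ℂ a - starRingEnd ℂ b) •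
          adjoint Ra (adjoint Rb x) = adjoint Rb x := e2
      exact sub_eq_of_eq_add' e2'.symm
    calc ⟪(a - b) • Rb (G a φ), x⟫_ℂ
        = (starRingEnd ℂ a - starRingEnd ℂ b) * ⟪Rb (G a φ), x⟫_ℂ := by
          rw [inner_smul_left, map_sub]
      _ = (starRingEnd ℂ a - starRingEnd ℂ b) * ⟪G a φ, adjoint Rb x⟫_ℂ := by
          rw [adjoint_inner_right]
      _ = (starRingEnd ℂ a - starRingEnd ℂ b) *
          ⟪φ, τ ⟨adjoint Ra (adjoint Rb x), hmem3⟩⟫_ℂ := by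
          rw [hG a (adjoint Ra) hRa' φ (adjoint Rb x) hmem3]
      _ = ⟪φ, τ ((starRingEnd ℂ a - starRingEnd ℂ b) •
            (⟨adjoint Ra (adjoint Rb x), hmem3⟩ : A.domain))⟫_ℂ := by
          rw [map_smul, inner_smul_right]
      _ = ⟪φ, τ (⟨adjoint Rb x, hmem1⟩ - ⟨adjoint Ra x, hmem2⟩)⟫_ℂ := by rw [← hri]
      _ = ⟪φ, τ ⟨adjoint Rb x, hmem1⟩⟫_ℂ - ⟪φ, τ ⟨adjoint Ra x, hmem2⟩⟫_ℂ := by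
          rw [map_sub, inner_sub_right]
      _ = ⟪G b φ, x⟫_ℂ - ⟪G a φ, x⟫_ℂ := by
          rw [hG b (adjoint Rb) hRb' φ x hmem1, hG a (adjoint Ra) hRa' φ x hmem2]
      _ = ⟪G b φ - G a φ, x⟫_ℂ := (inner_sub_left _ _ _).symm
  have hRz' := adjoint_isResolvent hA hRz
  refine ⟨?_, fun Rw hRw φ => key z w Rz Rw hRz hRw φ, ?_, ?_⟩
  · -- (i)
    intro φ hmem
    set u : A.domain := ⟨G z φ, hmem⟩ with hu
    set v : H := -(A u) + z • G z φ with hv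
    have hv0 : v = 0 := by
      have heq : Set.EqOn (fun x : H => ⟪v, x⟫_ℂ) (fun _ => (0 : ℂ))
          {x : H | ∃ u : A.domain, (u : H) = x ∧ τ u = 0} := by
        rintro x ⟨u0, hu0x, hτu0⟩
        show ⟪v, x⟫_ℂ = 0
        rw [← hu0x]
        have hy := hRz'.2.2 u0
        have hmemy : adjoint Rz (-(A u0) + (starRingEnd ℂ z) • (u0 : H)) ∈ A.domain :=
          hRz'.1 _
        have hsub : (⟨adjoint Rz (-(A u0) + (starRingEnd ℂ z) • (u0 : H)), hmemy⟩ : A.domain)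
            = u0 := Subtype.ext hy
        calc ⟪v, (u0 : H)⟫_ℂ
            = -⟪A u, (u0 : H)⟫_ℂ + (starRingEnd ℂ z) * ⟪G z φ, (u0 : H)⟫_ℂ := by
              rw [hv, inner_add_left, inner_neg_left, inner_smul_left]
          _ = -⟪(u : H), A u0⟫_ℂ + (starRingEnd ℂ z) * ⟪G z φ, (u0 : H)⟫_ℂ := by
              rw [hA.2.1 u u0]
          _ = ⟪G z φ, -(A u0) + (starRingEnd ℂ z) • (u0 : H)⟫_ℂ := by
              rw [inner_add_right, inner_neg_right, inner_smul_right]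
          _ = ⟪φ, τ ⟨adjoint Rz (-(A u0) + (starRingEnd ℂ z) • (u0 : H)), hmemy⟩⟫_ℂ :=
              hG z (adjoint Rz) hRz' φ _ hmemy
          _ = ⟪φ, τ u0⟫_ℂ := by rw [hsub]
          _ = 0 := by rw [hτu0, inner_zero_right]
      have hcont : Continuous fun x : H => ⟪v, x⟫_ℂ :=
        Continuous.inner continuous_const continuous_id
      have := Continuous.ext_on hkerdense hcont continuous_const heq
      have hvv : ⟪v, v⟫_ℂ = 0 := congrFun this v
      exact inner_self_eq_zero.mp hvv
    have h6 := hRz.2.2 u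
    have harg : -(A u) + z • (u : H) = (0 : H) := hv0
    rw [harg, map_zero] at h6
    exact h6.symm
  · -- ran (G w - G z) ⊆ dom A
    intro φ
    rw [← key z w Rz Rw0 hRz hRw0 φ]
    exact A.domain.smul_mem _ (hRw0.1 _)
  · -- (iii)
    intro φ hmem
    have hk : (w - z) • Rz (G w φ) = G z φ - G w φ := key w z Rw0 Rz hRw0 hRz φ
    have hmem' : Rz (G w φ) ∈ A.domain := hRz.1 _
    have he : (⟨G z φ - G w φ, hmem⟩ : A.domain)
        = (w - z) • (⟨Rz (G w φ), hmem'⟩ : A.domain) := by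
      apply Subtype.ext
      show G z φ - G w φ = (w - z) • Rz (G w φ)
      exact hk.symm
    rw [he, A.map_smul]
    have hAr : A ⟨Rz (G w φ), hmem'⟩ = z • Rz (G w φ) - G w φ := by
      have h7 := hRz.2.1 (G w φ) hmem'
      set t : H := A ⟨Rz (G w φ), hmem'⟩ with ht
      nth_rewrite 2 [← h7]; abel
    rw [hAr]
    have hz1 : z • ((w - z) • Rz (G w φ)) = z • (G z φ - G w φ) := by rw [hk]
    calc (w - z) • (z • Rz (G w φ) - G w φ)
        = z • ((w - z) • Rz (G w φ)) - (w - z) • G w φ := by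
          rw [smul_sub, smul_comm]
      _ = z • (G z φ - G w φ) - (w - z) • G w φ := by rw [hz1]
      _ = z • G z φ - w • G w φ := by module


end
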